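/- arXiv:0901.4138 — 2 statements merged into one kernel-verified Lean document; each statement's English description precedes it below -/
import Mathlib

section
/- For chi-square random variables χ²_1,...,χ²_M where χ²_k has k degrees of freedom (not necessarily independent), lim_{M→∞} E[max_{1≤k≤M} χ²_k / M] = 1. -/
/-!
Since `χ²_M` is among the variables, `E[max_{k ≤ M} χ²_k] ≥ E[χ²_M] = M`. For the upper bound,
`x ≤ t + λ⁻¹ e^{λ(x - t)}` for `λ > 0` turns the maximum into a sum, so that whatever the
dependence, `E[max_{k ≤ M} χ²_k] ≤ t + λ⁻¹ e^{-λt} ∑_{k ≤ M} (1 - 2λ)^{-k/2}` by the chi-square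
moment generating function. Taking `(1 - 2λ)⁻¹ = 1 + ε` and `t = (1 + ε) M`, the error term is
`λ⁻¹ M ((1 + ε) e^{-ε})^{M/2} = o(M)`, as `1 + ε < e^ε`.
-/

open MeasureTheory ProbabilityTheory Filter

/-- The chi-square distribution with `k` degrees of freedom, as the Gamma distribution
with shape `k/2` and rate `1/2`. -/
noncomputable def chiSqMeasure (k : ℕ) : Measure ℝ :=
  gammaMeasure ((k : ℝ) / 2) (1 / 2)

open Real

namespace ProbabilityTheory

section Gamma

variable {a r l : ℝ}

lemma measurable_gammaPDF (a r : ℝ) : Measurable (gammaPDF a r) :=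
  (measurable_gammaPDFReal a r).ennreal_ofReal

lemma ae_nonneg_gammaMeasure (a r : ℝ) : ∀ᵐ x ∂gammaMeasure a r, 0 ≤ x := by
  simp only [ae_iff, not_le]
  exact (withDensity_apply _ measurableSet_Iio).trans (lintegral_gammaPDF_of_nonpos le_rfl)

lemma ofReal_mul_gammaPDF (ha : 0 < a) (hr : 0 < r) (x : ℝ) :
    ENNReal.ofReal x * gammaPDF a r x = ENNReal.ofReal (a / r) * gammaPDF (a + 1) r x := by
  rcases lt_or_ge x 0 with hx | hx
  · simp [gammaPDF_of_neg hx]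
  rw [gammaPDF_of_nonneg hx, gammaPDF_of_nonneg hx, ← ENNReal.ofReal_mul hx,
    ← ENNReal.ofReal_mul (div_nonneg ha.le hr.le)]
  congr 1
  have hxa : x ^ (a + 1 - 1) = x ^ (a - 1) * x := by
    rw [← rpow_add_one' hx (by simp [ha.ne'])]; ring_nf
  rw [hxa, rpow_add_one hr.ne', Gamma_add_one ha.ne']
  field_simp

lemma ofReal_exp_mul_gammaPDF (hr : 0 ≤ r) (hlr : l < r) (x : ℝ) :
    ENNReal.ofReal (exp (l * x)) * gammaPDF a r x
      = ENNReal.ofReal ((r / (r - l)) ^ a) * gammaPDF a (r - l) x := by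
  have hrl : 0 < r - l := sub_pos.2 hlr
  rcases lt_or_ge x 0 with hx | hx
  · simp [gammaPDF_of_neg hx]
  rw [gammaPDF_of_nonneg hx, gammaPDF_of_nonneg hx, ← ENNReal.ofReal_mul (exp_nonneg _),
    ← ENNReal.ofReal_mul (rpow_nonneg (div_nonneg hr hrl.le) _)]
  congr 1
  have hexp : exp (l * x) * exp (-(r * x)) = exp (-((r - l) * x)) := by
    rw [← exp_add]; ring_nf
  rw [div_rpow hr hrl.le, ← hexp]
  field_simp

lemma lintegral_ofReal_gammaMeasure (ha : 0 < a) (hr : 0 < r) :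
    ∫⁻ x, ENNReal.ofReal x ∂gammaMeasure a r = ENNReal.ofReal (a / r) := by
  rw [gammaMeasure, lintegral_withDensity_eq_lintegral_mul _
    (measurable_gammaPDF a r) ENNReal.measurable_ofReal]
  simp_rw [Pi.mul_apply, mul_comm (gammaPDF a r _), ofReal_mul_gammaPDF ha hr]
  rw [lintegral_const_mul _ (measurable_gammaPDF _ r),
    lintegral_gammaPDF_eq_one (by linarith) hr, mul_one]

lemma lintegral_exp_mul_gammaMeasure (ha : 0 < a) (hr : 0 ≤ r) (hlr : l < r) :
    ∫⁻ x, ENNReal.ofReal (exp (l * x)) ∂gammaMeasure a r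
      = ENNReal.ofReal ((r / (r - l)) ^ a) := by
  rw [gammaMeasure, lintegral_withDensity_eq_lintegral_mul _
    (measurable_gammaPDF a r) (by fun_prop)]
  simp_rw [Pi.mul_apply, mul_comm (gammaPDF a r _), ofReal_exp_mul_gammaPDF hr hlr]
  rw [lintegral_const_mul _ (measurable_gammaPDF _ _),
    lintegral_gammaPDF_eq_one ha (sub_pos.2 hlr), mul_one]

lemma integrable_id_gammaMeasure (ha : 0 < a) (hr : 0 < r) :
    Integrable (fun x ↦ x) (gammaMeasure a r) :=
  (lintegral_ofReal_ne_top_iff_integrable (f := fun x ↦ x) aestronglyMeasurable_id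
    (ae_nonneg_gammaMeasure a r)).1 <| by
      rw [lintegral_ofReal_gammaMeasure ha hr]; exact ENNReal.ofReal_ne_top

lemma integral_id_gammaMeasure (ha : 0 < a) (hr : 0 < r) :
    ∫ x, x ∂gammaMeasure a r = a / r := by
  rw [integral_eq_lintegral_of_nonneg_ae (ae_nonneg_gammaMeasure a r) aestronglyMeasurable_id,
    lintegral_ofReal_gammaMeasure ha hr, ENNReal.toReal_ofReal (div_nonneg ha.le hr.le)]

lemma integrable_exp_mul_gammaMeasure (ha : 0 < a) (hr : 0 ≤ r) (hlr : l < r) :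
    Integrable (fun x ↦ exp (l * x)) (gammaMeasure a r) :=
  (lintegral_ofReal_ne_top_iff_integrable (by fun_prop)
    (ae_of_all _ fun _ ↦ (exp_pos _).le)).1 <| by
      rw [lintegral_exp_mul_gammaMeasure ha hr hlr]; exact ENNReal.ofReal_ne_top

lemma mgf_id_gammaMeasure (ha : 0 < a) (hr : 0 ≤ r) (hlr : l < r) :
    mgf id (gammaMeasure a r) l = (r / (r - l)) ^ a := by
  rw [mgf, integral_eq_lintegral_of_nonneg_ae (ae_of_all _ fun _ ↦ (exp_pos _).le) (by fun_prop)]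
  simp only [id]
  rw [lintegral_exp_mul_gammaMeasure ha hr hlr,
    ENNReal.toReal_ofReal (rpow_nonneg (div_nonneg hr (sub_pos.2 hlr).le) _)]

end Gamma

section ChiSq

variable {k : ℕ} {l : ℝ}

lemma isProbabilityMeasure_chiSqMeasure (hk : 0 < k) : IsProbabilityMeasure (chiSqMeasure k) :=
  isProbabilityMeasure_gammaMeasure (half_pos (Nat.cast_pos.2 hk)) one_half_pos

lemma integrable_id_chiSqMeasure (hk : 0 < k) : Integrable (fun x ↦ x) (chiSqMeasure k) :=
  integrable_id_gammaMeasure (half_pos (Nat.cast_pos.2 hk)) one_half_pos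

lemma integral_id_chiSqMeasure (hk : 0 < k) : ∫ x, x ∂chiSqMeasure k = k := by
  rw [chiSqMeasure, integral_id_gammaMeasure (half_pos (Nat.cast_pos.2 hk)) one_half_pos]
  ring

lemma integrable_exp_mul_chiSqMeasure (hk : 0 < k) (hl : l < 1 / 2) :
    Integrable (fun x ↦ exp (l * x)) (chiSqMeasure k) :=
  integrable_exp_mul_gammaMeasure (half_pos (Nat.cast_pos.2 hk)) one_half_pos.le hl

lemma mgf_id_chiSqMeasure (hk : 0 < k) (hl : l < 1 / 2) :
    mgf id (chiSqMeasure k) l = (1 - 2 * l)⁻¹ ^ ((k : ℝ) / 2) := by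
  rw [chiSqMeasure, mgf_id_gammaMeasure (half_pos (Nat.cast_pos.2 hk)) one_half_pos.le hl]
  congr 1
  field_simp

end ChiSq

section HasLaw

variable {Ω 𝓧 : Type*} [MeasurableSpace Ω] [MeasurableSpace 𝓧] {μ : Measure Ω} {ν : Measure 𝓧}
  {X : Ω → 𝓧}

lemma HasLaw.of_map_eq (hν : ν ≠ 0) (h : μ.map X = ν) : HasLaw X ν μ :=
  ⟨AEMeasurable.of_map_ne_zero (h ▸ hν), h⟩

lemma HasLaw.integrable_comp {E : Type*} [NormedAddCommGroup E] (hX : HasLaw X ν μ)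
    {f : 𝓧 → E} (hf : Integrable f ν) : Integrable (f ∘ X) μ :=
  (hX.map_eq ▸ hf).comp_aemeasurable hX.aemeasurable

lemma HasLaw.mgf_eq {X : Ω → ℝ} {ν : Measure ℝ} (hX : HasLaw X ν μ) : mgf X μ = mgf id ν := by
  rw [← mgf_id_map hX.aemeasurable, hX.map_eq]

end HasLaw

section Maximum

variable {ι Ω : Type*} [Fintype ι] [Nonempty ι] [MeasurableSpace Ω] {μ : Measure Ω} {l : ℝ}

lemma iSup_le_add_inv_mul_sum_exp (z : ι → ℝ) (hl : 0 < l) (t : ℝ) :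
    ⨆ i, z i ≤ t + l⁻¹ * exp (-(l * t)) * ∑ i, exp (l * z i) := by
  refine ciSup_le fun i ↦ ?_
  have hlin : z i - t ≤ l⁻¹ * exp (l * (z i - t)) := by
    rw [le_inv_mul_iff₀ hl]
    linarith [add_one_le_exp (l * (z i - t))]
  have hsum : exp (l * z i) ≤ ∑ j, exp (l * z j) :=
    Finset.single_le_sum (fun j _ ↦ (exp_pos (l * z j)).le) (Finset.mem_univ i)
  calc z i ≤ t + l⁻¹ * exp (l * (z i - t)) := by linarith
    _ = t + l⁻¹ * exp (-(l * t)) * exp (l * z i) := by rw [mul_assoc, ← exp_add]; ring_nf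
    _ ≤ t + l⁻¹ * exp (-(l * t)) * ∑ j, exp (l * z j) := by gcongr

lemma integrable_iSup_of_fintype {Z : ι → Ω → ℝ} (hZ : ∀ i, Integrable (Z i) μ) :
    Integrable (fun ω ↦ ⨆ i, Z i ω) μ := by
  have hsup : (fun ω ↦ ⨆ i, Z i ω) = Finset.univ.sup' Finset.univ_nonempty Z := by
    ext ω
    rw [Finset.sup'_apply, Finset.sup'_univ_eq_ciSup]
  rw [hsup]
  exact Finset.sup'_induction (p := (Integrable · μ)) _ _ (fun _ hf _ hg ↦ hf.sup hg) fun i _ ↦ hZ i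

lemma integral_iSup_le_add_inv_mul_sum_mgf [IsProbabilityMeasure μ] {Z : ι → Ω → ℝ}
    (hZ : ∀ i, Integrable (Z i) μ) (hexp : ∀ i, Integrable (fun ω ↦ exp (l * Z i ω)) μ)
    (hl : 0 < l) (t : ℝ) :
    ∫ ω, ⨆ i, Z i ω ∂μ ≤ t + l⁻¹ * exp (-(l * t)) * ∑ i, mgf (Z i) μ l := by
  have hsum : Integrable (fun ω ↦ ∑ i, exp (l * Z i ω)) μ :=
    integrable_finsetSum _ fun i _ ↦ hexp i
  calc ∫ ω, ⨆ i, Z i ω ∂μ ≤ ∫ ω, t + l⁻¹ * exp (-(l * t)) * ∑ i, exp (l * Z i ω) ∂μ :=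
        integral_mono (integrable_iSup_of_fintype hZ) ((integrable_const t).add
          (hsum.const_mul _)) fun ω ↦ iSup_le_add_inv_mul_sum_exp (Z · ω) hl t
    _ = t + l⁻¹ * exp (-(l * t)) * ∑ i, mgf (Z i) μ l := by
        rw [integral_add (integrable_const t) (hsum.const_mul _), integral_const,
          integral_const_mul, integral_finsetSum _ fun i _ ↦ hexp i]
        simp [mgf]

end Maximum

section ChiSqMaximum

variable {Ω : Type*} [MeasurableSpace Ω] {μ : Measure Ω} {X : ℕ → Ω → ℝ}

lemma le_integral_iSup_chiSq (hX : ∀ k, 0 < k → HasLaw (X k) (chiSqMeasure k) μ)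
    {M : ℕ} (hM : 0 < M) :
    (M : ℝ) ≤ ∫ ω, ⨆ k : Fin M, X (k + 1) ω ∂μ := by
  obtain ⟨n, rfl⟩ : ∃ n, M = n + 1 := ⟨M - 1, by omega⟩
  have hint : ∀ k, 0 < k → Integrable (X k) μ := fun k hk ↦
    (hX k hk).integrable_comp (integrable_id_chiSqMeasure hk)
  calc ((n + 1 : ℕ) : ℝ) = ∫ ω, X (n + 1) ω ∂μ := by
        rw [(hX _ n.succ_pos).integral_eq, integral_id_chiSqMeasure n.succ_pos]
    _ ≤ ∫ ω, ⨆ k : Fin (n + 1), X (k + 1) ω ∂μ :=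
        integral_mono (hint _ n.succ_pos)
          (integrable_iSup_of_fintype fun k ↦ hint _ (Nat.succ_pos k))
          fun ω ↦ le_ciSup (f := fun k : Fin (n + 1) ↦ X (k + 1) ω) (Finite.bddAbove_range _)
            (Fin.last n)

lemma integral_iSup_chiSq_le [IsProbabilityMeasure μ]
    (hX : ∀ k, 0 < k → HasLaw (X k) (chiSqMeasure k) μ) {ε : ℝ} (hε : 0 < ε)
    {M : ℕ} (hM : 0 < M) :
    ∫ ω, ⨆ k : Fin M, X (k + 1) ω ∂μ
      ≤ M * (1 + ε + 2 * (1 + ε) / ε * ((1 + ε) * exp (-ε)) ^ ((M : ℝ) / 2)) := by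
  have : Nonempty (Fin M) := ⟨⟨0, hM⟩⟩
  set l := ε / (2 * (1 + ε)) with hl_def
  have hl : 0 < l := by positivity
  have hl2 : l < 1 / 2 := by rw [hl_def, div_lt_iff₀ (by positivity)]; linarith
  have hmgf : ∀ k : Fin M, mgf (X (k + 1)) μ l ≤ (1 + ε) ^ ((M : ℝ) / 2) := by
    intro k
    have hrate : (1 - 2 * l)⁻¹ = 1 + ε := by rw [hl_def]; field_simp; ring
    rw [(hX _ (Nat.succ_pos k)).mgf_eq, mgf_id_chiSqMeasure (Nat.succ_pos k) hl2, hrate]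
    gcongr
    · linarith
    · exact_mod_cast k.isLt
  have hexp : exp (-(l * ((1 + ε) * M))) = exp (-ε) ^ ((M : ℝ) / 2) := by
    rw [← exp_mul, hl_def]; congr 1; field_simp
  calc ∫ ω, ⨆ k : Fin M, X (k + 1) ω ∂μ
      ≤ (1 + ε) * M + l⁻¹ * exp (-(l * ((1 + ε) * M))) * ∑ k : Fin M, mgf (X (k + 1)) μ l :=
        integral_iSup_le_add_inv_mul_sum_mgf
          (fun k : Fin M ↦ (hX _ (Nat.succ_pos k)).integrable_comp
            (integrable_id_chiSqMeasure (Nat.succ_pos k)))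
          (fun k : Fin M ↦ (hX _ (Nat.succ_pos k)).integrable_comp
            (integrable_exp_mul_chiSqMeasure (Nat.succ_pos k) hl2)) hl _
    _ ≤ (1 + ε) * M + l⁻¹ * exp (-(l * ((1 + ε) * M))) * (M * (1 + ε) ^ ((M : ℝ) / 2)) := by
        gcongr
        simpa using Finset.sum_le_card_nsmul Finset.univ _ _ fun k _ ↦ hmgf k
    _ = M * (1 + ε + 2 * (1 + ε) / ε * ((1 + ε) * exp (-ε)) ^ ((M : ℝ) / 2)) := by
        rw [hexp, mul_rpow (by positivity) (exp_pos _).le, hl_def]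
        field_simp

lemma tendsto_rpow_natCast_div_two_atTop {q : ℝ} (hq₀ : 0 ≤ q) (hq₁ : q < 1) :
    Tendsto (fun M : ℕ ↦ q ^ ((M : ℝ) / 2)) atTop (nhds 0) :=
  (tendsto_rpow_atTop_of_base_lt_one q (by linarith) hq₁).comp
    (tendsto_natCast_atTop_atTop.atTop_div_const two_pos)

end ChiSqMaximum

end ProbabilityTheory

/-- For (possibly dependent) chi-square random variables `χ²_k` with `k` degrees of
freedom, `E[max_{1 ≤ k ≤ M} χ²_k / M] → 1` as `M → ∞`. -/
theorem expectation_max_chiSq_tendsto_one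
    {Ω : Type*} [MeasurableSpace Ω] (μ : Measure Ω) [IsProbabilityMeasure μ]
    (X : ℕ → Ω → ℝ)
    (hlaw : ∀ k, 1 ≤ k → μ.map (X k) = chiSqMeasure k) :
    Tendsto (fun M : ℕ => (∫ ω, ⨆ k : Fin M, X (k + 1) ω ∂μ) / M)
      atTop (nhds 1) := by
  have hX : ∀ k, 0 < k → HasLaw (X k) (chiSqMeasure k) μ := fun k hk ↦
    HasLaw.of_map_eq (isProbabilityMeasure_chiSqMeasure hk).ne_zero (hlaw k hk)
  refine tendsto_order.2 ⟨fun a ha ↦ ?_, fun b hb ↦ ?_⟩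
  · filter_upwards [eventually_gt_atTop 0] with M hM
    exact ha.trans_le <| (one_le_div (Nat.cast_pos.2 hM)).2 (le_integral_iSup_chiSq hX hM)
  · obtain ⟨ε, hε, hεb⟩ : ∃ ε, 0 < ε ∧ 1 + ε < b := ⟨(b - 1) / 2, by linarith, by linarith⟩
    have hq : (1 + ε) * exp (-ε) < 1 := by
      rw [exp_neg, ← div_eq_mul_inv, div_lt_one (exp_pos ε)]
      linarith [add_one_lt_exp hε.ne']
    have hbound : Tendsto
        (fun M : ℕ ↦ 1 + ε + 2 * (1 + ε) / ε * ((1 + ε) * exp (-ε)) ^ ((M : ℝ) / 2))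
        atTop (nhds (1 + ε)) := by
      simpa using (tendsto_rpow_natCast_div_two_atTop (by positivity) hq).const_mul
        (2 * (1 + ε) / ε) |>.const_add (1 + ε)
    filter_upwards [eventually_gt_atTop 0, hbound.eventually_lt_const hεb] with M hM hMb
    exact ((div_le_iff₀' (Nat.cast_pos.2 hM)).2 (integral_iSup_chiSq_le hX hε hM)).trans_lt hMb
end

section
/- If χ²_M is a chi-square random variable with M degrees of freedom and 0 < ε < 1, then P(χ²_M < M(1-ε)) ≤ (M(1-ε))^{M/2} e^{-M/2 + Mε/2} / (ε Γ(M/2) 2^{M/2}), for all M ≥ 2. -/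
open MeasureTheory ProbabilityTheory

open Real Set

/-!
Since the gamma density `f` vanishes on `(-∞, 0)`, `P(X < t) ≤ t · sup_{[0,t]} f`. For shape
`a ≥ 1` and `t = a(1-ε)/r`, the tangent-line bound `u^(a-1) ≤ exp((a-1)(u-1))` at `u = x/t` gives
`f x / f t ≤ exp((t-x)(1-aε)/t) ≤ exp(1-ε) ≤ 1/ε` on `[0,t]`, so `P(X < t) ≤ t f(t) / ε`.
The chi-square law is the case `a = M/2`, `r = 1/2`, where `t = M(1-ε)`.
-/

lemma exp_one_sub_le_inv {ε : ℝ} (hε : 0 < ε) : exp (1 - ε) ≤ ε⁻¹ := by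
  have h : ε ≤ exp (ε - 1) := by linarith [add_one_le_exp (ε - 1)]
  rw [show 1 - ε = -(ε - 1) by ring, exp_neg]
  exact inv_anti₀ hε h

lemma rpow_le_exp_mul_sub_one {u b : ℝ} (hu : 0 ≤ u) (hb : 0 ≤ b) :
    u ^ b ≤ exp (b * (u - 1)) := by
  rw [mul_comm, exp_mul]
  exact rpow_le_rpow hu (by linarith [add_one_le_exp (u - 1)]) hb

lemma rpow_sub_one_mul_exp_le {a r t ε x : ℝ} (ha : 1 ≤ a) (hε0 : 0 < ε) (hε1 : ε < 1)
    (hrt : r * t = a * (1 - ε)) (hx : 0 ≤ x) (hxt : x ≤ t) :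
    x ^ (a - 1) * exp (-(r * x)) ≤ t ^ (a - 1) * exp (-(r * t)) / ε := by
  have ht : 0 < t := by
    refine (hx.trans hxt).lt_of_ne fun h => ?_
    rw [← h, mul_zero] at hrt
    nlinarith
  have hexponent : (a - 1) * (x / t - 1) + r * (t - x) ≤ 1 - ε := by
    rw [← mul_le_mul_iff_of_pos_right ht]
    calc ((a - 1) * (x / t - 1) + r * (t - x)) * t = (t - x) * (1 - a * ε) := by
          field_simp
          linear_combination (t - x) * hrt
      _ ≤ (t - x) * (1 - ε) := by gcongr; nlinarith
      _ ≤ (1 - ε) * t := by nlinarith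
  calc x ^ (a - 1) * exp (-(r * x))
      = t ^ (a - 1) * (x / t) ^ (a - 1) * exp (r * (t - x)) * exp (-(r * t)) := by
        rw [← mul_rpow ht.le (div_nonneg hx ht.le), mul_div_cancel₀ _ ht.ne', mul_assoc,
          ← exp_add]
        ring_nf
    _ ≤ t ^ (a - 1) * exp ((a - 1) * (x / t - 1)) * exp (r * (t - x)) * exp (-(r * t)) := by
        gcongr
        exact rpow_le_exp_mul_sub_one (div_nonneg hx ht.le) (by linarith)
    _ = t ^ (a - 1) * exp ((a - 1) * (x / t - 1) + r * (t - x)) * exp (-(r * t)) := by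
        rw [exp_add, mul_assoc (t ^ (a - 1))]
    _ ≤ t ^ (a - 1) * ε⁻¹ * exp (-(r * t)) := by
        gcongr
        exact (exp_le_exp.2 hexponent).trans (exp_one_sub_le_inv hε0)
    _ = t ^ (a - 1) * exp (-(r * t)) / ε := by ring

lemma gammaMeasure_Iio_le {a r t C : ℝ} (ht : 0 ≤ t)
    (hC : ∀ x ∈ Ico 0 t, gammaPDFReal a r x ≤ C) :
    gammaMeasure a r (Iio t) ≤ ENNReal.ofReal (t * C) := by
  have hdisj : Disjoint (Iio 0) (Ico 0 t) :=
    Set.disjoint_left.2 fun x hx hx' => (not_lt.2 hx'.1) hx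
  calc gammaMeasure a r (Iio t) = ∫⁻ x in Ico 0 t, gammaPDF a r x := by
        rw [gammaMeasure, withDensity_apply _ measurableSet_Iio, ← Iio_union_Ico_eq_Iio ht,
          lintegral_union measurableSet_Ico hdisj, lintegral_gammaPDF_of_nonpos le_rfl, zero_add]
    _ ≤ ∫⁻ _ in Ico 0 t, ENNReal.ofReal C :=
        setLIntegral_mono measurable_const fun x hx => ENNReal.ofReal_le_ofReal (hC x hx)
    _ = ENNReal.ofReal (t * C) := by
        rw [setLIntegral_const, Real.volume_Ico, sub_zero, ENNReal.ofReal_mul ht, mul_comm]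

theorem toReal_gammaMeasure_Iio_le {a r ε : ℝ} (ha : 1 ≤ a) (hr : 0 < r) (hε0 : 0 < ε)
    (hε1 : ε < 1) :
    (gammaMeasure a r (Iio (a * (1 - ε) / r))).toReal
      ≤ a * (1 - ε) / r * gammaPDFReal a r (a * (1 - ε) / r) / ε := by
  set t := a * (1 - ε) / r
  have ht : 0 ≤ t := div_nonneg (mul_nonneg (by linarith) (by linarith)) hr.le
  have hrt : r * t = a * (1 - ε) := mul_div_cancel₀ _ hr.ne'
  refine ENNReal.toReal_le_of_le_ofReal
    (div_nonneg (mul_nonneg ht (gammaPDFReal_nonneg (by linarith) hr t)) hε0.le) ?_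
  rw [mul_div_assoc]
  refine gammaMeasure_Iio_le ht fun x hx => ?_
  simp only [gammaPDFReal, if_pos hx.1, if_pos ht, mul_assoc, mul_div_assoc]
  rw [← mul_div_assoc]
  exact mul_le_mul_of_nonneg_left (rpow_sub_one_mul_exp_le ha hε0 hε1 hrt hx.1 hx.2.le)
    (div_nonneg (rpow_nonneg hr.le a) (Gamma_pos_of_pos (by linarith)).le)

/-- Lower-tail bound for the chi-square distribution: for `M ≥ 2` and `0 < ε < 1`,
`P(χ²_M < M(1-ε)) ≤ (M(1-ε))^{M/2} e^{-M/2 + Mε/2} / (ε Γ(M/2) 2^{M/2})`. -/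
theorem chiSq_lower_tail_bound
    (M : ℕ) (hM : 2 ≤ M) (ε : ℝ) (hε0 : 0 < ε) (hε1 : ε < 1) :
    (chiSqMeasure M (Set.Iio ((M : ℝ) * (1 - ε)))).toReal
      ≤ ((M : ℝ) * (1 - ε)) ^ ((M : ℝ) / 2)
          * Real.exp (-(M : ℝ) / 2 + M * ε / 2)
          / (ε * Real.Gamma ((M : ℝ) / 2) * 2 ^ ((M : ℝ) / 2)) := by
  have hM2 : (2 : ℝ) ≤ M := by exact_mod_cast hM
  have ht : 0 < (M : ℝ) * (1 - ε) := mul_pos (by linarith) (by linarith)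
  have hbound := toReal_gammaMeasure_Iio_le (a := (M : ℝ) / 2) (by linarith)
    (by norm_num : (0 : ℝ) < 1 / 2) hε0 hε1
  rw [show (M : ℝ) / 2 * (1 - ε) / (1 / 2) = M * (1 - ε) by ring] at hbound
  refine hbound.trans_eq ?_
  rw [gammaPDFReal, if_pos ht.le, div_rpow zero_le_one zero_le_two, one_rpow,
    rpow_sub_one ht.ne', show -(1 / 2 * ((M : ℝ) * (1 - ε))) = -M / 2 + M * ε / 2 by ring]
  field_simp [(sub_pos.2 hε1).ne']
end
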